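/- Let φ denote the ReLU function applied entrywise. Fix X ∈ ℝ^{d×n} and suppose (W, U, a) and (W', U', a') satisfy ‖W‖₂, ‖W'‖₂ ≤ ρ̄_w < 1, ‖U‖₂, ‖U'‖₂ ≤ ρ̄_u, and ‖a‖₂, ‖a'‖₂ ≤ ρ̄_a. Let Z = φ(W Z + U X) and Z' = φ(W' Z' + U' X) be the corresponding equilibrium points and set ŷ = Zᵀa, ŷ' = (Z')ᵀa'. Then, with c_w = ρ̄_u ρ̄_a/(1−ρ̄_w)², c_u = ρ̄_a/(1−ρ̄_w), c_a = ρ̄_u/(1−ρ̄_w), ‖ŷ − ŷ'‖₂ ≤ ( c_w ‖W − W'‖₂ + c_u ‖U − U'‖₂ + c_a ‖a − a'‖₂ ) ‖X‖_F. -/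

import Mathlib

open scoped BigOperators Matrix Kronecker
open MeasureTheory ProbabilityTheory Filter

noncomputable section

/-- ReLU on reals. -/
def relu (x : ℝ) : ℝ := max x 0

/-- Entrywise ReLU on matrices. -/
def reluM {α β : Type*} (A : Matrix α β ℝ) : Matrix α β ℝ :=
  Matrix.of fun i j => relu (A i j)

/-- Frobenius norm of a matrix. -/
def frobNorm {α β : Type*} [Fintype α] [Fintype β] (A : Matrix α β ℝ) : ℝ :=
  Real.sqrt (∑ i, ∑ j, (A i j) ^ 2)

/-- Euclidean norm of a vector. -/
def euclNorm {α : Type*} [Fintype α] (v : α → ℝ) : ℝ :=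
  Real.sqrt (∑ i, (v i) ^ 2)

/-- Operator (spectral) norm of a real matrix. -/
def opNorm {α β : Type*} [Fintype α] [Fintype β] [DecidableEq β]
    (A : Matrix α β ℝ) : ℝ :=
  ‖(LinearMap.toContinuousLinearMap (Matrix.toEuclideanLin A))‖

/-- Least eigenvalue of a square matrix, as the infimum of the Rayleigh
quotient over the unit sphere. -/
def lamMin {n : ℕ} (A : Matrix (Fin n) (Fin n) ℝ) : ℝ :=
  ⨅ v : {v : Fin n → ℝ // ∑ i, (v i) ^ 2 = 1}, ∑ i, A.mulVec v.1 i * v.1 i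

/-- The dual activation `Q(x) = (√(1-x²) + (π - arccos x)·x)/π` of ReLU. -/
def Qf (x : ℝ) : ℝ := (Real.sqrt (1 - x ^ 2) + (Real.pi - Real.arccos x) * x) / Real.pi

/-- Expectation of `φ(u)·φ(v)` for `(u,v)` a centered Gaussian vector with
covariance `[[a, c], [c, b]]`, written via the representation `u = √a·g₁`,
`v = (c/√a)·g₁ + √(b - c²/a)·g₂` with `g₁, g₂` i.i.d. standard Gaussians. -/
def gaussRelu2 (a b c : ℝ) : ℝ :=
  ∫ p : ℝ × ℝ, relu (Real.sqrt a * p.1) *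
      relu (c / Real.sqrt a * p.1 + Real.sqrt (b - c ^ 2 / a) * p.2)
    ∂((gaussianReal 0 1).prod (gaussianReal 0 1))

/-- The population Gram matrices `K^{(l)}`, defined recursively from the
pairwise input correlations `c i j = xᵢᵀxⱼ/d`:  `K^{(0)} = 0` and
`K^{(l)}_{ij} = 2·E[φ(u)φ(v)]` for `(u,v) ~ N(0, Λ^{(l)}_{ij})`. -/
def popGram {n : ℕ} (sw2 : ℝ) (c : Fin n → Fin n → ℝ) : ℕ → Matrix (Fin n) (Fin n) ℝ
  | 0 => 0
  | l + 1 => Matrix.of fun i j =>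
      2 * gaussRelu2 (sw2 * popGram sw2 c l i i + 1) (sw2 * popGram sw2 c l j j + 1)
        (sw2 * popGram sw2 c l i j + c i j)

/-- The iterates `Z^{(0)} = 0`, `Z^{(l+1)} = φ(W Z^{(l)} + U X)`. -/
def Zit {m d n : ℕ} (W : Matrix (Fin m) (Fin m) ℝ) (U : Matrix (Fin m) (Fin d) ℝ)
    (X : Matrix (Fin d) (Fin n) ℝ) : ℕ → Matrix (Fin m) (Fin n) ℝ
  | 0 => 0
  | l + 1 => reluM (W * Zit W U X l + U * X)

end

/-!
Put `B = ρ̄_u ‖X‖_F / (1 - ρ̄_w)`. ReLU is 1-Lipschitz and vanishes at 0, and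
`‖A M‖_F ≤ ‖A‖₂ ‖M‖_F`, so the equilibrium equation gives
`‖Z'‖_F ≤ ρ̄_w ‖Z'‖_F + ρ̄_u ‖X‖_F`, i.e. `‖Z'‖_F ≤ B`. Likewise, from
`W Z + U X - (W' Z' + U' X) = W (Z - Z') + (W - W') Z' + (U - U') X`
one gets `‖Z - Z'‖_F ≤ (‖W - W'‖₂ B + ‖U - U'‖₂ ‖X‖_F) / (1 - ρ̄_w)`.
Finally `Zᵀa - Z'ᵀa' = (Z - Z')ᵀa + Z'ᵀ(a - a')` and `‖Mᵀv‖₂ ≤ ‖M‖_F ‖v‖₂`.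
-/
lemma le_div_one_sub_of_le_mul_add {x ρ c : ℝ} (hρ : ρ < 1) (h : x ≤ ρ * x + c) :
    x ≤ c / (1 - ρ) := by
  rw [le_div_iff₀ (by linarith)]
  linarith

section Norms

variable {α β γ : Type*} [Fintype α] [Fintype β] [Fintype γ]

lemma euclNorm_eq_norm (v : α → ℝ) : euclNorm v = ‖WithLp.toLp 2 v‖ := by
  simp [euclNorm, EuclideanSpace.norm_eq, sq_abs]

lemma euclNorm_nonneg (v : α → ℝ) : 0 ≤ euclNorm v := Real.sqrt_nonneg _

lemma euclNorm_add_le (u v : α → ℝ) : euclNorm (u + v) ≤ euclNorm u + euclNorm v := by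
  simpa only [euclNorm_eq_norm, WithLp.toLp_add] using norm_add_le _ _

lemma frobNorm_eq_euclNorm (A : Matrix α β ℝ) :
    frobNorm A = euclNorm fun p : α × β => A p.1 p.2 := by
  simp [frobNorm, euclNorm, Fintype.sum_prod_type]

lemma frobNorm_nonneg (A : Matrix α β ℝ) : 0 ≤ frobNorm A := Real.sqrt_nonneg _

lemma frobNorm_add_le (A B : Matrix α β ℝ) : frobNorm (A + B) ≤ frobNorm A + frobNorm B := by
  simp only [frobNorm_eq_euclNorm]
  exact euclNorm_add_le (fun p : α × β => A p.1 p.2) fun p => B p.1 p.2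

lemma frobNorm_sq_eq_sum_euclNorm_col_sq (A : Matrix α β ℝ) :
    frobNorm A ^ 2 = ∑ j, euclNorm (fun i => A i j) ^ 2 := by
  unfold frobNorm euclNorm
  simp only [Real.sq_sqrt (Finset.sum_nonneg fun _ _ => sq_nonneg _)]
  rw [Real.sq_sqrt (by positivity)]
  exact Finset.sum_comm

lemma opNorm_nonneg [DecidableEq β] (A : Matrix α β ℝ) : 0 ≤ opNorm A := norm_nonneg _

lemma euclNorm_mulVec_le [DecidableEq β] (A : Matrix α β ℝ) (v : β → ℝ) :
    euclNorm (A *ᵥ v) ≤ opNorm A * euclNorm v := by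
  simpa [euclNorm_eq_norm, opNorm] using
    (LinearMap.toContinuousLinearMap (Matrix.toEuclideanLin A)).le_opNorm (WithLp.toLp 2 v)

lemma frobNorm_mul_le [DecidableEq β] (A : Matrix α β ℝ) (B : Matrix β γ ℝ) :
    frobNorm (A * B) ≤ opNorm A * frobNorm B := by
  refine (pow_le_pow_iff_left₀ (frobNorm_nonneg _)
    (mul_nonneg (opNorm_nonneg A) (frobNorm_nonneg B)) two_ne_zero).mp ?_
  rw [mul_pow, frobNorm_sq_eq_sum_euclNorm_col_sq, frobNorm_sq_eq_sum_euclNorm_col_sq,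
    Finset.mul_sum]
  refine Finset.sum_le_sum fun j _ => ?_
  have hcol : (fun i => (A * B) i j) = A *ᵥ fun i => B i j := by
    funext i; simp [Matrix.mul_apply, Matrix.mulVec, dotProduct]
  rw [hcol, ← mul_pow]
  exact pow_le_pow_left₀ (euclNorm_nonneg _) (euclNorm_mulVec_le A _) 2

lemma euclNorm_transpose_mulVec_le (A : Matrix α β ℝ) (v : α → ℝ) :
    euclNorm (Aᵀ *ᵥ v) ≤ frobNorm A * euclNorm v := by
  unfold euclNorm frobNorm
  rw [← Real.sqrt_mul (by positivity)]
  apply Real.sqrt_le_sqrt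
  calc ∑ j, (Aᵀ *ᵥ v) j ^ 2 ≤ ∑ j, (∑ i, A i j ^ 2) * ∑ i, v i ^ 2 :=
        Finset.sum_le_sum fun j _ => Finset.sum_mul_sq_le_sq_mul_sq _ _ _
    _ = (∑ i, ∑ j, A i j ^ 2) * ∑ i, v i ^ 2 := by
        rw [← Finset.sum_mul, Finset.sum_comm]

lemma frobNorm_reluM_sub_le (A B : Matrix α β ℝ) :
    frobNorm (reluM A - reluM B) ≤ frobNorm (A - B) := by
  refine Real.sqrt_le_sqrt (Finset.sum_le_sum fun i _ => Finset.sum_le_sum fun j _ => ?_)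
  simpa [reluM, relu, sq_abs] using
    pow_le_pow_left₀ (abs_nonneg _) (abs_max_sub_max_le_abs (A i j) (B i j) 0) 2

lemma frobNorm_reluM_le (A : Matrix α β ℝ) : frobNorm (reluM A) ≤ frobNorm A := by
  have hzero : reluM (0 : Matrix α β ℝ) = 0 := by
    ext i j; simp [reluM, relu]
  simpa [hzero] using frobNorm_reluM_sub_le A 0

end Norms

section Equilibrium

variable {m d n : Type*} [Fintype m] [Fintype d] [Fintype n] [DecidableEq m] [DecidableEq d]
  {W W' : Matrix m m ℝ} {U U' : Matrix m d ℝ} {X : Matrix d n ℝ} {Z Z' : Matrix m n ℝ}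
  {ρw ρu : ℝ}

lemma frobNorm_le_of_eq_reluM (hW : opNorm W ≤ ρw) (hρw : ρw < 1) (hU : opNorm U ≤ ρu)
    (hZ : Z = reluM (W * Z + U * X)) :
    frobNorm Z ≤ ρu * frobNorm X / (1 - ρw) := by
  refine le_div_one_sub_of_le_mul_add hρw ?_
  calc frobNorm Z ≤ frobNorm (W * Z + U * X) :=
        (congrArg frobNorm hZ).trans_le (frobNorm_reluM_le _)
    _ ≤ opNorm W * frobNorm Z + opNorm U * frobNorm X :=
        (frobNorm_add_le _ _).trans (add_le_add (frobNorm_mul_le _ _) (frobNorm_mul_le _ _))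
    _ ≤ ρw * frobNorm Z + ρu * frobNorm X := by
        gcongr <;> exact frobNorm_nonneg _

lemma frobNorm_sub_le_of_eq_reluM (hW : opNorm W ≤ ρw) (hρw : ρw < 1)
    (hZ : Z = reluM (W * Z + U * X)) (hZ' : Z' = reluM (W' * Z' + U' * X)) :
    frobNorm (Z - Z') ≤
      (opNorm (W - W') * frobNorm Z' + opNorm (U - U') * frobNorm X) / (1 - ρw) := by
  refine le_div_one_sub_of_le_mul_add hρw ?_
  have hsplit : W * Z + U * X - (W' * Z' + U' * X) =
      W * (Z - Z') + ((W - W') * Z' + (U - U') * X) := by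
    rw [Matrix.mul_sub, Matrix.sub_mul, Matrix.sub_mul]
    abel
  calc frobNorm (Z - Z') ≤ frobNorm (W * Z + U * X - (W' * Z' + U' * X)) :=
        (congrArg frobNorm (congrArg₂ (· - ·) hZ hZ')).trans_le (frobNorm_reluM_sub_le _ _)
    _ ≤ frobNorm (W * (Z - Z')) + (frobNorm ((W - W') * Z') + frobNorm ((U - U') * X)) := by
        rw [hsplit]
        exact (frobNorm_add_le _ _).trans (add_le_add_right (frobNorm_add_le _ _) _)
    _ ≤ opNorm W * frobNorm (Z - Z') +
          (opNorm (W - W') * frobNorm Z' + opNorm (U - U') * frobNorm X) := by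
        gcongr <;> exact frobNorm_mul_le _ _
    _ ≤ ρw * frobNorm (Z - Z') +
          (opNorm (W - W') * frobNorm Z' + opNorm (U - U') * frobNorm X) := by
        gcongr; exact frobNorm_nonneg _

end Equilibrium

lemma euclNorm_transpose_mulVec_sub_le {α β : Type*} [Fintype α] [Fintype β]
    (Z Z' : Matrix α β ℝ) (a a' : α → ℝ) :
    euclNorm (Zᵀ *ᵥ a - Z'ᵀ *ᵥ a') ≤
      frobNorm (Z - Z') * euclNorm a + frobNorm Z' * euclNorm (a - a') := by
  have hsplit : Zᵀ *ᵥ a - Z'ᵀ *ᵥ a' = (Z - Z')ᵀ *ᵥ a + Z'ᵀ *ᵥ (a - a') := by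
    rw [Matrix.transpose_sub, Matrix.sub_mulVec, Matrix.mulVec_sub]
    abel
  rw [hsplit]
  exact (euclNorm_add_le _ _).trans
    (add_le_add (euclNorm_transpose_mulVec_le _ _) (euclNorm_transpose_mulVec_le _ _))

theorem prediction_lipschitz_in_parameters_general {m d n : ℕ}
    (X : Matrix (Fin d) (Fin n) ℝ)
    (W W' : Matrix (Fin m) (Fin m) ℝ) (U U' : Matrix (Fin m) (Fin d) ℝ)
    (a a' : Fin m → ℝ) (ρw ρu ρa : ℝ)
    (hW : opNorm W ≤ ρw) (hW' : opNorm W' ≤ ρw) (hρw : ρw < 1)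
    (hU' : opNorm U' ≤ ρu)
    (ha : euclNorm a ≤ ρa)
    (Z Z' : Matrix (Fin m) (Fin n) ℝ)
    (hZ : Z = reluM (W * Z + U * X)) (hZ' : Z' = reluM (W' * Z' + U' * X))
    (cw cu ca : ℝ) (hcw : cw = ρu * ρa / (1 - ρw) ^ 2)
    (hcu : cu = ρa / (1 - ρw)) (hca : ca = ρu / (1 - ρw)) :
    euclNorm (Zᵀ.mulVec a - Z'ᵀ.mulVec a') ≤
      (cw * opNorm (W - W') + cu * opNorm (U - U') + ca * euclNorm (a - a')) *
        frobNorm X := by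
  have hZ'_le := frobNorm_le_of_eq_reluM hW' hρw hU' hZ'
  have hsub_le : frobNorm (Z - Z') ≤
      (opNorm (W - W') * (ρu * frobNorm X / (1 - ρw)) + opNorm (U - U') * frobNorm X) /
        (1 - ρw) :=
    (frobNorm_sub_le_of_eq_reluM hW hρw hZ hZ').trans <| by
      gcongr
      exact opNorm_nonneg _
  have hρa : 0 ≤ ρa := (euclNorm_nonneg a).trans ha
  calc euclNorm (Zᵀ *ᵥ a - Z'ᵀ *ᵥ a')
      ≤ frobNorm (Z - Z') * euclNorm a + frobNorm Z' * euclNorm (a - a') :=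
        euclNorm_transpose_mulVec_sub_le Z Z' a a'
    _ ≤ (opNorm (W - W') * (ρu * frobNorm X / (1 - ρw)) + opNorm (U - U') * frobNorm X) /
          (1 - ρw) * ρa + ρu * frobNorm X / (1 - ρw) * euclNorm (a - a') :=
        add_le_add (mul_le_mul_of_nonneg hsub_le ha (frobNorm_nonneg _) hρa)
          (mul_le_mul_of_nonneg_right hZ'_le (euclNorm_nonneg _))
    _ = (cw * opNorm (W - W') + cu * opNorm (U - U') + ca * euclNorm (a - a')) *
          frobNorm X := by
        have hρw' : 1 - ρw ≠ 0 := by linarith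
        rw [hcw, hcu, hca]
        field_simp

/-- Lipschitz dependence of the prediction `ŷ = Zᵀa` on the
parameters: `‖ŷ - ŷ'‖₂ ≤ (c_w ‖W-W'‖₂ + c_u ‖U-U'‖₂ + c_a ‖a-a'‖₂) ‖X‖_F`. -/
theorem prediction_lipschitz_in_parameters {m d n : ℕ}
    (X : Matrix (Fin d) (Fin n) ℝ)
    (W W' : Matrix (Fin m) (Fin m) ℝ) (U U' : Matrix (Fin m) (Fin d) ℝ)
    (a a' : Fin m → ℝ) (ρw ρu ρa : ℝ)
    (hW : opNorm W ≤ ρw) (hW' : opNorm W' ≤ ρw) (hρw : ρw < 1)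
    (hU : opNorm U ≤ ρu) (hU' : opNorm U' ≤ ρu)
    (ha : euclNorm a ≤ ρa) (ha' : euclNorm a' ≤ ρa)
    (Z Z' : Matrix (Fin m) (Fin n) ℝ)
    (hZ : Z = reluM (W * Z + U * X)) (hZ' : Z' = reluM (W' * Z' + U' * X))
    (cw cu ca : ℝ) (hcw : cw = ρu * ρa / (1 - ρw) ^ 2)
    (hcu : cu = ρa / (1 - ρw)) (hca : ca = ρu / (1 - ρw)) :
    euclNorm (Zᵀ.mulVec a - Z'ᵀ.mulVec a') ≤
      (cw * opNorm (W - W') + cu * opNorm (U - U') + ca * euclNorm (a - a')) *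
        frobNorm X :=
  prediction_lipschitz_in_parameters_general X W W' U U' a a' ρw ρu ρa hW hW' hρw hU' ha Z Z' hZ hZ'
    cw cu ca hcw hcu hca
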